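/- arXiv:1212.3548 — 6 statements merged into one kernel-verified Lean document; each statement's English description precedes it below -/
import Mathlib

section
/- Let Ψ be an explosive branching mechanism with Φ(λ) = ∫_λ^0 du/Ψ(u), and suppose Ψ(u) → −c ∈ (−∞,0) as u → ∞. Let a_t = u(t,0+) and u(t,λ) as above. Then for each fixed λ > 0, u(t,λ) − a_t converges to c·Φ(λ) as t → ∞. -/
/-!
Since `-Ψ` is nondecreasing with limit `c`, on `(a_t, u(t,λ)]` the integrand `1/(-Ψ)` lies
between `1/c` and `1/(-Ψ(a_t))`. The identity `∫_{a_t}^{u(t,λ)} du/(-Ψ(u)) = Φ(λ)` therefore traps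
`u(t,λ) - a_t` between `-Ψ(a_t) Φ(λ)` and `c Φ(λ)`, and `-Ψ(a_t) → c` because `a_t → ∞`.
-/

open Set MeasureTheory Filter Topology

lemma AntitoneOn.le_of_tendsto_atTop {f : ℝ → ℝ} {a L x : ℝ} (hf : AntitoneOn f (Ioi a))
    (hlim : Tendsto f atTop (𝓝 L)) (hx : a < x) : L ≤ f x :=
  le_of_tendsto hlim ((eventually_ge_atTop x).mono fun _ hy => hf hx (hx.trans_le hy) hy)

lemma AntitoneOn.integrableOn_Ioc_of_integrableOn_Ioc {f : ℝ → ℝ} {a b d : ℝ} (hab : a < b)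
    (hf : AntitoneOn f (Ioi a)) (hint : IntegrableOn f (Ioc a b)) : IntegrableOn f (Ioc a d) := by
  have hIcc : IntegrableOn f (Icc b (max b d)) :=
    (hf.mono fun x hx => hab.trans_le hx.1).integrableOn_isCompact isCompact_Icc
  refine (hint.union hIcc).mono_set fun x hx => ?_
  rcases le_or_gt x b with hxb | hxb
  · exact Or.inl ⟨hx.1, hxb⟩
  · exact Or.inr ⟨hxb.le, hx.2.trans (le_max_right b d)⟩

lemma setIntegral_Ioc_le_mul {f : ℝ → ℝ} {a b M : ℝ} (hab : a ≤ b)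
    (hf : IntegrableOn f (Ioc a b)) (hM : ∀ x ∈ Ioc a b, f x ≤ M) :
    ∫ x in Ioc a b, f x ≤ (b - a) * M :=
  calc ∫ x in Ioc a b, f x ≤ ∫ _ in Ioc a b, M :=
        setIntegral_mono_on hf (integrableOn_const measure_Ioc_lt_top.ne) measurableSet_Ioc hM
    _ = (b - a) * M := by rw [setIntegral_const, Real.volume_real_Ioc_of_le hab, smul_eq_mul]

lemma mul_le_setIntegral_Ioc {f : ℝ → ℝ} {a b m : ℝ} (hab : a ≤ b)
    (hf : IntegrableOn f (Ioc a b)) (hm : ∀ x ∈ Ioc a b, m ≤ f x) :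
    (b - a) * m ≤ ∫ x in Ioc a b, f x := by
  simpa [Real.volume_real_Ioc_of_le hab, mul_comm] using
    setIntegral_ge_of_const_le_real measurableSet_Ioc measure_Ioc_lt_top.ne hm hf

section BranchingMechanism

variable {Ψ : ℝ → ℝ} {c : ℝ} (hneg : ∀ x > (0:ℝ), Ψ x < 0)
  (hanti : AntitoneOn Ψ (Ioi (0:ℝ))) (hlimΨ : Tendsto Ψ atTop (𝓝 (-c)))
include hneg hanti

lemma antitoneOn_one_div_neg : AntitoneOn (fun x => 1 / -Ψ x) (Ioi (0:ℝ)) :=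
  fun x hx _ hy hxy =>
    one_div_le_one_div_of_le (neg_pos.2 (hneg x hx)) (neg_le_neg (hanti hx hy hxy))

include hlimΨ

lemma one_div_le_one_div_neg {x : ℝ} (hx : 0 < x) : 1 / c ≤ 1 / -Ψ x :=
  one_div_le_one_div_of_le (neg_pos.2 (hneg x hx))
    (by linarith [hanti.le_of_tendsto_atTop hlimΨ hx])

lemma pos_of_tendsto_neg : 0 < c :=
  (neg_pos.2 (hneg 1 one_pos)).trans_le (by linarith [hanti.le_of_tendsto_atTop hlimΨ one_pos])

lemma setIntegral_Ioc_zero_one_div_neg_pos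
    (hint : IntegrableOn (fun x => 1 / -Ψ x) (Ioc (0:ℝ) 1)) {l : ℝ} (hl : 0 < l) :
    0 < ∫ x in Ioc (0:ℝ) l, 1 / -Ψ x := by
  have hc := pos_of_tendsto_neg hneg hanti hlimΨ
  calc (0:ℝ) < (l - 0) * (1 / c) := by positivity
    _ ≤ ∫ x in Ioc (0:ℝ) l, 1 / -Ψ x :=
      mul_le_setIntegral_Ioc hl.le
        ((antitoneOn_one_div_neg hneg hanti).integrableOn_Ioc_of_integrableOn_Ioc one_pos hint)
        fun x hx => one_div_le_one_div_neg hneg hanti hlimΨ hx.1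

lemma mul_le_sub_and_sub_le_mul {A B I : ℝ} (hA : 0 < A)
    (hI : ∫ x in Ioc A B, 1 / -Ψ x = I) (hIpos : 0 < I) :
    -Ψ A * I ≤ B - A ∧ B - A ≤ c * I := by
  have hAB : A ≤ B := by
    by_contra! hBA
    rw [Ioc_eq_empty (not_lt.2 hBA.le), Measure.restrict_empty, integral_zero_measure] at hI
    exact hIpos.ne hI
  have hψA : 0 < -Ψ A := neg_pos.2 (hneg A hA)
  have hc := pos_of_tendsto_neg hneg hanti hlimΨ
  have hanti' := antitoneOn_one_div_neg hneg hanti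
  have hint : IntegrableOn (fun x => 1 / -Ψ x) (Ioc A B) :=
    ((hanti'.mono fun x hx => hA.trans_le hx.1).integrableOn_isCompact isCompact_Icc).mono_set
      Ioc_subset_Icc_self
  have hupper : I ≤ (B - A) * (1 / -Ψ A) :=
    hI ▸ setIntegral_Ioc_le_mul hAB hint fun x hx => hanti' hA (hA.trans hx.1) hx.1.le
  have hlower : (B - A) * (1 / c) ≤ I :=
    hI ▸ mul_le_setIntegral_Ioc hAB hint fun x hx =>
      one_div_le_one_div_neg hneg hanti hlimΨ (hA.trans hx.1)
  rw [mul_one_div, le_div_iff₀ hψA] at hupper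
  rw [mul_one_div, div_le_iff₀ hc] at hlower
  constructor <;> linarith

end BranchingMechanism

theorem conditional_limit_finite_case_general (Ψ Φ : ℝ → ℝ) (u : ℝ → ℝ → ℝ) (c : ℝ)
    (hneg : ∀ x > (0:ℝ), Ψ x < 0)
    (hanti : AntitoneOn Ψ (Set.Ioi (0:ℝ)))
    (hint : IntegrableOn (fun x => 1 / (-Ψ x)) (Set.Ioc (0:ℝ) 1))
    (hΦ : ∀ l : ℝ, 0 ≤ l → Φ l = ∫ x in Set.Ioc (0:ℝ) l, 1 / (-Ψ x))
    (hlimΨ : Tendsto Ψ atTop (nhds (-c)))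
    (ha : Tendsto (fun t => u t 0) atTop atTop)
    (hPhiId : ∀ l > (0:ℝ), ∀ t ≥ (0:ℝ),
      ∫ x in Set.Ioc (u t 0) (u t l), 1 / (-Ψ x) = Φ l) :
    ∀ l > (0:ℝ), Tendsto (fun t => u t l - u t 0) atTop (nhds (c * Φ l)) := by
  intro l hl
  have hΦl : 0 < Φ l :=
    hΦ l hl.le ▸ setIntegral_Ioc_zero_one_div_neg_pos hneg hanti hlimΨ hint hl
  have hbounds : ∀ᶠ t in atTop,
      -Ψ (u t 0) * Φ l ≤ u t l - u t 0 ∧ u t l - u t 0 ≤ c * Φ l := by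
    filter_upwards [ha.eventually_gt_atTop 0, eventually_ge_atTop 0] with t hat ht
    exact mul_le_sub_and_sub_le_mul hneg hanti hlimΨ hat (hPhiId l hl t ht) hΦl
  have hlower : Tendsto (fun t => -Ψ (u t 0) * Φ l) atTop (𝓝 (c * Φ l)) := by
    simpa using (hlimΨ.comp ha).neg.mul_const (Φ l)
  exact tendsto_of_tendsto_of_tendsto_of_le_of_le' hlower tendsto_const_nhds
    (hbounds.mono fun _ h => h.1) (hbounds.mono fun _ h => h.2)

theorem conditional_limit_finite_case (Ψ Φ : ℝ → ℝ) (u : ℝ → ℝ → ℝ) (c : ℝ)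
    (hc : 0 < c)
    (hcont : ContinuousOn Ψ (Set.Ioi (0:ℝ)))
    (hneg : ∀ x > (0:ℝ), Ψ x < 0)
    (hconv : ConvexOn ℝ (Set.Ioi (0:ℝ)) Ψ)
    (hanti : AntitoneOn Ψ (Set.Ioi (0:ℝ)))
    (hint : IntegrableOn (fun x => 1 / (-Ψ x)) (Set.Ioc (0:ℝ) 1))
    (hΦ : ∀ l : ℝ, 0 ≤ l → Φ l = ∫ x in Set.Ioc (0:ℝ) l, 1 / (-Ψ x))
    (hode : ∀ l ≥ (0:ℝ), ∀ t ≥ (0:ℝ), HasDerivAt (fun s => u s l) (-Ψ (u t l)) t)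
    (hinit : ∀ l > (0:ℝ), u 0 l = l)
    (hlimΨ : Tendsto Ψ atTop (nhds (-c)))
    (ha : Tendsto (fun t => u t 0) atTop atTop)
    (hu : ∀ l > (0:ℝ), Tendsto (fun t => u t l) atTop atTop)
    (hPhiId : ∀ l > (0:ℝ), ∀ t ≥ (0:ℝ),
      ∫ x in Set.Ioc (u t 0) (u t l), 1 / (-Ψ x) = Φ l) :
    ∀ l > (0:ℝ), Tendsto (fun t => u t l - u t 0) atTop (nhds (c * Φ l)) :=
  conditional_limit_finite_case_general Ψ Φ u c hneg hanti hint hΦ hlimΨ ha hPhiId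
end

section
/- Let Ψ be an explosive branching mechanism with lim_{u→∞} Ψ(u) = −∞. Then for each fixed λ > 0, u(t,λ) − a_t → ∞ as t → ∞, where a_t = u(t,0+). -/
/-! Since `1 / (-Ψ)` is decreasing, the identity `∫_{a_t}^{u(t,λ)} dx / (-Ψ x) = Φ(λ)` gives
`Φ(λ) · (-Ψ(a_t)) ≤ u(t,λ) - a_t`, and the left side tends to `∞` because `a_t → ∞` and
`Ψ → -∞`. -/

open Set MeasureTheory Filter

lemma lt_of_setIntegral_Ioc_pos {g : ℝ → ℝ} {a b : ℝ} (h : 0 < ∫ x in Ioc a b, g x) : a < b := by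
  by_contra hba
  rw [Ioc_eq_empty hba, Measure.restrict_empty, integral_zero_measure] at h
  exact h.false

lemma setIntegral_Ioc_le_mul_sub {g : ℝ → ℝ} {a b C : ℝ} (hab : a ≤ b)
    (hg : ∀ x ∈ Ioc a b, ‖g x‖ ≤ C) : ∫ x in Ioc a b, g x ≤ C * (b - a) :=
  calc ∫ x in Ioc a b, g x ≤ ‖∫ x in Ioc a b, g x‖ := Real.le_norm_self _
    _ ≤ C * volume.real (Ioc a b) := norm_setIntegral_le_of_norm_le_const measure_Ioc_lt_top hg
    _ = C * (b - a) := by rw [Real.volume_real_Ioc_of_le hab]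

lemma setIntegral_Ioc_inv_neg_mul_le_sub {Ψ : ℝ → ℝ} (hneg : ∀ x > (0:ℝ), Ψ x < 0)
    (hanti : AntitoneOn Ψ (Ioi 0)) {a b : ℝ} (ha : 0 < a)
    (hpos : 0 < ∫ x in Ioc a b, 1 / (-Ψ x)) :
    (∫ x in Ioc a b, 1 / (-Ψ x)) * (-Ψ a) ≤ b - a := by
  have hab := lt_of_setIntegral_Ioc_pos hpos
  have hΨa : 0 < -Ψ a := neg_pos.mpr (hneg a ha)
  have hbound : ∀ x ∈ Ioc a b, ‖1 / (-Ψ x)‖ ≤ 1 / (-Ψ a) := by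
    intro x hx
    have hx0 : 0 < x := ha.trans hx.1
    rw [Real.norm_of_nonneg (one_div_nonneg.mpr (neg_pos.mpr (hneg x hx0)).le)]
    exact one_div_le_one_div_of_le hΨa (neg_le_neg (hanti ha hx0 hx.1.le))
  have := setIntegral_Ioc_le_mul_sub hab.le hbound
  rwa [one_div_mul_eq_div, le_div_iff₀ hΨa] at this

theorem conditional_limit_infinite_case_general (Ψ Φ : ℝ → ℝ) (u : ℝ → ℝ → ℝ)
    (hneg : ∀ x > (0:ℝ), Ψ x < 0)
    (hanti : AntitoneOn Ψ (Set.Ioi (0:ℝ)))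
    (hΦpos : ∀ l > (0:ℝ), 0 < Φ l)
    (hlimΨ : Tendsto Ψ atTop atBot)
    (ha : Tendsto (fun t => u t 0) atTop atTop)
    (hPhiId : ∀ l > (0:ℝ), ∀ t ≥ (0:ℝ),
      ∫ x in Set.Ioc (u t 0) (u t l), 1 / (-Ψ x) = Φ l) :
    ∀ l > (0:ℝ), Tendsto (fun t => u t l - u t 0) atTop atTop := by
  intro l hl
  have hbound : ∀ᶠ t in atTop, Φ l * (-Ψ (u t 0)) ≤ u t l - u t 0 := by
    filter_upwards [ha.eventually_gt_atTop 0, eventually_ge_atTop 0] with t hat ht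
    have hid := hPhiId l hl t ht
    rw [← hid]
    exact setIntegral_Ioc_inv_neg_mul_le_sub hneg hanti hat (hid ▸ hΦpos l hl)
  have hlim : Tendsto (fun t => Φ l * (-Ψ (u t 0))) atTop atTop :=
    (tendsto_neg_atBot_atTop.comp (hlimΨ.comp ha)).const_mul_atTop (hΦpos l hl)
  exact tendsto_atTop_mono' atTop hbound hlim

theorem conditional_limit_infinite_case (Ψ Φ : ℝ → ℝ) (u : ℝ → ℝ → ℝ)
    (hcont : ContinuousOn Ψ (Set.Ioi (0:ℝ)))
    (hneg : ∀ x > (0:ℝ), Ψ x < 0)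
    (hconv : ConvexOn ℝ (Set.Ioi (0:ℝ)) Ψ)
    (hanti : AntitoneOn Ψ (Set.Ioi (0:ℝ)))
    (hint : IntegrableOn (fun x => 1 / (-Ψ x)) (Set.Ioc (0:ℝ) 1))
    (hΦ : ∀ l : ℝ, 0 ≤ l → Φ l = ∫ x in Set.Ioc (0:ℝ) l, 1 / (-Ψ x))
    (hΦpos : ∀ l > (0:ℝ), 0 < Φ l)
    (hode : ∀ l ≥ (0:ℝ), ∀ t ≥ (0:ℝ), HasDerivAt (fun s => u s l) (-Ψ (u t l)) t)
    (hinit : ∀ l > (0:ℝ), u 0 l = l)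
    (hlimΨ : Tendsto Ψ atTop atBot)
    (ha : Tendsto (fun t => u t 0) atTop atTop)
    (hu : ∀ l > (0:ℝ), Tendsto (fun t => u t l) atTop atTop)
    (hPhiId : ∀ l > (0:ℝ), ∀ t ≥ (0:ℝ),
      ∫ x in Set.Ioc (u t 0) (u t l), 1 / (-Ψ x) = Φ l) :
    ∀ l > (0:ℝ), Tendsto (fun t => u t l - u t 0) atTop atTop :=
  conditional_limit_infinite_case_general Ψ Φ u hneg hanti hΦpos hlimΨ ha hPhiId
end

section
/- Let Ψ be a branching mechanism of finite-variation form Ψ(u) = D·u + ∫_{(0,∞)} (e^{-uh} − 1) ν(dh), and let u(t,λ) solve ∂_t u = −Ψ(u), u(0,λ)=λ. Assume that for each t ≥ 0, u(t,λ) → ∞ as λ → ∞. Then lim_{λ→∞} u(t,λ)/λ = e^{-Dt} for all t ≥ 0. -/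
/-!
Since the jump integral is nonpositive, `Ψ x ≤ D x`, so for any `K > D` the solution cannot
cross the barrier `s ↦ l e^{-Ks}` from above: on `[0, t]` the whole trajectory is at least
`l e^{-Kt}`. By dominated convergence `Ψ x / x → D`, and integrating
`d/ds log u(s, l) = -Ψ(u)/u` over `[0, t]` gives `log (u(t, l) / l) → -D t`.
-/

open Set MeasureTheory Filter

lemma abs_exp_neg_sub_one_le_min {y : ℝ} (hy : 0 ≤ y) : |Real.exp (-y) - 1| ≤ min 1 y := by
  have h_le_one : Real.exp (-y) ≤ 1 := Real.exp_le_one_iff.mpr (neg_nonpos.mpr hy)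
  have h_ge : 1 - y ≤ Real.exp (-y) := by linarith [Real.add_one_le_exp (-y)]
  rw [abs_of_nonpos (by linarith)]
  exact le_min (by linarith [Real.exp_pos (-y)]) (by linarith)

/-- Dominated convergence: for `x ≥ 1` the integrand is bounded by `min 1 h`. -/
lemma tendsto_setIntegral_exp_neg_mul_sub_one_div_atTop {ν : Measure ℝ}
    (hν : IntegrableOn (fun h => min 1 h) (Ioi 0) ν) :
    Tendsto (fun x => (∫ h in Ioi (0:ℝ), (Real.exp (-(x * h)) - 1) ∂ν) / x) atTop
      (nhds 0) := by
  simp_rw [← integral_div]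
  have hbound : ∀ {x h : ℝ}, 0 < x → 0 < h →
      ‖(Real.exp (-(x * h)) - 1) / x‖ ≤ min x⁻¹ h := by
    intro x h hx hh
    rw [Real.norm_eq_abs, abs_div, abs_of_pos hx, div_le_iff₀ hx, min_mul_of_nonneg _ _ hx.le,
      inv_mul_cancel₀ hx.ne', mul_comm h]
    exact abs_exp_neg_sub_one_le_min (by positivity)
  have hdom := tendsto_integral_filter_of_dominated_convergence (l := atTop (α := ℝ))
    (fun h => min 1 h)
    (Eventually.of_forall fun x => (by fun_prop : Continuous fun h : ℝ =>
      (Real.exp (-(x * h)) - 1) / x).aestronglyMeasurable)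
    (by
      filter_upwards [eventually_ge_atTop 1] with x hx
      refine (ae_restrict_iff' measurableSet_Ioi).mpr (ae_of_all _ fun h hh => ?_)
      exact (hbound (by linarith) hh).trans (min_le_min_right h (inv_le_one_of_one_le₀ hx)))
    hν
    ((ae_restrict_iff' measurableSet_Ioi).mpr (ae_of_all _ fun h (hh : 0 < h) => by
      refine squeeze_zero_norm' ?_ tendsto_inv_atTop_zero
      filter_upwards [eventually_gt_atTop 0] with x hx
      exact (hbound hx hh).trans (min_le_left _ _)))
  rwa [integral_zero] at hdom

section Flow

variable {Ψ v : ℝ → ℝ} {D t : ℝ}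

lemma mul_exp_neg_le_of_hasDerivAt {K l : ℝ} (hΨ : ∀ x > 0, Ψ x ≤ D * x) (hDK : D < K)
    (hl : 0 < l) (hv : ∀ s ∈ Icc 0 t, HasDerivAt v (-Ψ (v s)) s) (hv0 : v 0 = l) :
    ∀ s ∈ Icc 0 t, l * Real.exp (-(K * s)) ≤ v s := by
  have hB : ∀ s, HasDerivAt (fun s => -(l * Real.exp (-(K * s))))
      (K * (l * Real.exp (-(K * s)))) s := by
    intro s
    exact (((hasDerivAt_id s).const_mul K).neg.exp.const_mul l).neg.congr_deriv
      (by simp only [id, Pi.neg_apply, mul_one]; ring)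
  intro s hs
  refine neg_le_neg_iff.mp (image_le_of_deriv_right_lt_deriv_boundary'
    (f := fun s => -v s) (fun s hs => (hv s hs).continuousAt.neg.continuousWithinAt)
    (fun s hs => (hv s (Ico_subset_Icc_self hs)).neg.hasDerivWithinAt) (by simp [hv0])
    (fun s _ => (hB s).continuousAt.continuousWithinAt) (fun s _ => (hB s).hasDerivWithinAt)
    ?_ hs)
  intro s _ hcontact
  have hpos : 0 < v s := by rw [neg_inj.mp hcontact]; positivity
  rw [neg_neg, ← neg_inj.mp hcontact]
  calc Ψ (v s) ≤ D * v s := hΨ _ hpos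
    _ < K * v s := by gcongr

lemma abs_log_div_add_mul_le {M ε : ℝ} (ht : 0 ≤ t) (hM : 0 < M)
    (hΨ : ∀ x ≥ M, |Ψ x / x - D| ≤ ε) (hv : ∀ s ∈ Icc 0 t, HasDerivAt v (-Ψ (v s)) s)
    (hvM : ∀ s ∈ Icc 0 t, M ≤ v s) :
    |Real.log (v t / v 0) + D * t| ≤ ε * t := by
  have hpos : ∀ s ∈ Icc 0 t, 0 < v s := fun s hs => hM.trans_le (hvM s hs)
  have hderiv : ∀ s ∈ Icc 0 t, HasDerivWithinAt (fun s => Real.log (v s) + D * s)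
      (-(Ψ (v s) / v s - D)) (Icc 0 t) s := by
    intro s hs
    exact (((hv s hs).log (hpos s hs).ne').add ((hasDerivAt_id s).const_mul D)).hasDerivWithinAt
      |>.congr_deriv (by ring)
  have h0 : (0:ℝ) ∈ Icc 0 t := ⟨le_rfl, ht⟩
  have hmvt := (convex_Icc 0 t).norm_image_sub_le_of_norm_hasDerivWithin_le hderiv
    (fun s hs => by rw [norm_neg]; exact hΨ _ (hvM s hs)) h0 ⟨ht, le_rfl⟩
  rw [Real.log_div (hpos t ⟨ht, le_rfl⟩).ne' (hpos 0 h0).ne']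
  simpa [Real.norm_eq_abs, abs_of_nonneg ht, add_sub_right_comm] using hmvt

theorem tendsto_flow_div_atTop (hΨ : ∀ x > 0, Ψ x ≤ D * x)
    (hdrift : Tendsto (fun x => Ψ x / x) atTop (nhds D)) {u : ℝ → ℝ → ℝ}
    (hode : ∀ l > (0:ℝ), ∀ t ≥ (0:ℝ), HasDerivAt (fun s => u s l) (-Ψ (u t l)) t)
    (hinit : ∀ l > (0:ℝ), u 0 l = l) (ht : 0 ≤ t) :
    Tendsto (fun l => u t l / l) atTop (nhds (Real.exp (-(D * t)))) := by
  set K := |D| + 1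
  have hK : 0 ≤ K := by positivity
  have hbarrier : ∀ l > 0, ∀ s ∈ Icc 0 t, l * Real.exp (-(K * t)) ≤ u s l := by
    intro l hl s hs
    calc l * Real.exp (-(K * t)) ≤ l * Real.exp (-(K * s)) := by
          gcongr; exact hs.2
      _ ≤ u s l := mul_exp_neg_le_of_hasDerivAt hΨ (by linarith [le_abs_self D]) hl
        (fun s hs => hode l hl s hs.1) (hinit l hl) s hs
  have hlog : Tendsto (fun l => Real.log (u t l / l)) atTop (nhds (-(D * t))) := by
    refine Metric.tendsto_nhds.mpr fun ε hε => ?_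
    obtain ⟨M, hM⟩ := eventually_atTop.mp
      (Metric.tendsto_nhds.mp hdrift (ε / (t + 1)) (by positivity))
    have hfloor : Tendsto (fun l => l * Real.exp (-(K * t))) atTop atTop :=
      tendsto_id.atTop_mul_const (Real.exp_pos _)
    filter_upwards [eventually_gt_atTop 0, hfloor.eventually_ge_atTop (max M 1)] with l hl hlM
    have hest := abs_log_div_add_mul_le ht (lt_of_lt_of_le one_pos (le_max_right M 1))
      (fun x hx => (hM x ((le_max_left M 1).trans hx)).le)
      (fun s hs => hode l hl s hs.1) (fun s hs => hlM.trans (hbarrier l hl s hs))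
    rw [hinit l hl] at hest
    rw [Real.dist_eq, sub_neg_eq_add]
    calc _ ≤ ε / (t + 1) * t := hest
      _ < ε := by rw [div_mul_eq_mul_div, div_lt_iff₀ (by positivity)]; nlinarith
  refine ((Real.continuous_exp.tendsto _).comp hlog).congr' ?_
  filter_upwards [eventually_gt_atTop 0] with l hl
  exact Real.exp_log (div_pos ((mul_pos hl (Real.exp_pos _)).trans_le
    (hbarrier l hl t ⟨ht, le_rfl⟩)) hl)

end Flow

theorem drift_coefficient_general (ν : Measure ℝ) (D : ℝ)
    (hν : IntegrableOn (fun h => min 1 h) (Set.Ioi (0:ℝ)) ν)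
    (Ψ : ℝ → ℝ)
    (hΨ : ∀ x ≥ (0:ℝ), Ψ x = D * x + ∫ h in Set.Ioi (0:ℝ), (Real.exp (-(x*h)) - 1) ∂ν)
    (u : ℝ → ℝ → ℝ)
    (hode : ∀ l > (0:ℝ), ∀ t ≥ (0:ℝ), HasDerivAt (fun s => u s l) (-Ψ (u t l)) t)
    (hinit : ∀ l > (0:ℝ), u 0 l = l) :
    ∀ t ≥ (0:ℝ), Tendsto (fun l => u t l / l) atTop (nhds (Real.exp (-(D * t)))) := by
  intro t ht
  have hle : ∀ x > 0, Ψ x ≤ D * x := fun x hx => by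
    have hjump : ∫ h in Ioi (0:ℝ), (Real.exp (-(x * h)) - 1) ∂ν ≤ 0 :=
      setIntegral_nonpos measurableSet_Ioi fun h (hh : 0 < h) => by
        linarith [Real.exp_le_one_iff.mpr (neg_nonpos.mpr (mul_pos hx hh).le)]
    linarith [hΨ x hx.le]
  have hdrift : Tendsto (fun x => Ψ x / x) atTop (nhds D) := by
    have hjump := (tendsto_setIntegral_exp_neg_mul_sub_one_div_atTop hν).const_add D
    rw [add_zero] at hjump
    refine hjump.congr' ?_
    filter_upwards [eventually_gt_atTop 0] with x hx
    rw [hΨ x hx.le, add_div, mul_div_cancel_right₀ _ hx.ne']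
  exact tendsto_flow_div_atTop hle hdrift hode hinit ht

theorem drift_coefficient (ν : Measure ℝ) (D : ℝ)
    (hν : IntegrableOn (fun h => min 1 h) (Set.Ioi (0:ℝ)) ν)
    (Ψ : ℝ → ℝ)
    (hΨ : ∀ x ≥ (0:ℝ), Ψ x = D * x + ∫ h in Set.Ioi (0:ℝ), (Real.exp (-(x*h)) - 1) ∂ν)
    (u : ℝ → ℝ → ℝ)
    (hode : ∀ l > (0:ℝ), ∀ t ≥ (0:ℝ), HasDerivAt (fun s => u s l) (-Ψ (u t l)) t)
    (hinit : ∀ l > (0:ℝ), u 0 l = l)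
    (hblow : ∀ t ≥ (0:ℝ), Tendsto (fun l => u t l) atTop atTop) :
    ∀ t ≥ (0:ℝ), Tendsto (fun l => u t l / l) atTop (nhds (Real.exp (-(D * t)))) :=
  drift_coefficient_general ν D hν Ψ hΨ u hode hinit
end

section
/- Let Ψ(u) = u^{1+α} L(u) with L slowly varying at 0 and α ∈ (0,1], and suppose ∫^∞ du/Ψ(u) < ∞. Let v(t) = u(t,+∞) be the minimal solution of ∂_t v = −Ψ(v) with v(0+) = +∞ (i.e. ∫_{v(t)}^∞ du/Ψ(u) = t). Then v(r)^α L(v(r)) ∼ 1/(α r) as r → ∞. -/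
/-!
Since `∫_{v r}^∞ dx / Ψ x = r` and `v r → 0`, the claim is Karamata's theorem at `0`:
`α u^α L(u) ∫_u^∞ dx / (x^(1+α) L x) → 1` as `u → 0+`.
The uniform convergence theorem (a Baire category argument for `t ↦ log L(e^{-t})`) yields
Potter's bounds `L x / L u, L u / L x ≤ e^η (x/u)^η` for `0 < u ≤ x ≤ δ`. Comparing the integrand
on `(u, δ]` with `x^(-1-α±η)` traps the quantity between `α e^{-η} / (α + η) - o(1)` and
`α e^η / (α - η) + o(1)`; the tail beyond `δ` is negligible because `u^α L(u) → 0`.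
-/

open Set MeasureTheory Filter Topology

section UniformConvergence

variable {h : ℝ → ℝ}

lemma exists_Icc_forall_ge_abs_sub_le (hc : Continuous h)
    (hp : ∀ s, Tendsto (fun t => h (t + s) - h t) atTop (𝓝 0)) {ε : ℝ} (hε : 0 < ε) :
    ∃ N a b, a < b ∧ ∀ s ∈ Icc a b, ∀ t ≥ N, |h (t + s) - h t| ≤ ε := by
  set E : ℕ → Set ℝ := fun n => {s | ∀ t ≥ (n : ℝ), |h (t + s) - h t| ≤ ε}
  have hE : ∀ n, IsClosed (E n) := fun n => by
    simp only [E, ofPred_forall]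
    exact isClosed_iInter fun t => isClosed_iInter fun _ => isClosed_le
      ((hc.comp (continuous_const.add continuous_id)).sub continuous_const).abs continuous_const
  have hcover : ⋃ n, E n = univ := by
    refine eq_univ_of_forall fun s => mem_iUnion.2 ?_
    obtain ⟨T, hT⟩ := eventually_atTop.1 ((hp s).eventually (Metric.closedBall_mem_nhds 0 hε))
    obtain ⟨n, hn⟩ := exists_nat_ge T
    exact ⟨n, fun t ht => by simpa [Real.dist_eq] using hT t (hn.trans ht)⟩
  obtain ⟨N, x, hx⟩ := nonempty_interior_of_iUnion_of_closed hE hcover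
  obtain ⟨r, hr, hball⟩ := Metric.mem_nhds_iff.1 (mem_interior_iff_mem_nhds.1 hx)
  refine ⟨N, x - r / 2, x + r / 2, by linarith, fun s hs => ?_⟩
  rw [← Real.closedBall_eq_Icc] at hs
  exact hball (Metric.closedBall_subset_ball (half_lt_self hr) hs)

lemma exists_pos_eventually_forall_Icc_abs_sub_le (hc : Continuous h)
    (hp : ∀ s, Tendsto (fun t => h (t + s) - h t) atTop (𝓝 0)) {ε : ℝ} (hε : 0 < ε) :
    ∃ c > 0, ∀ᶠ t in atTop, ∀ y ∈ Icc 0 c, |h (t + y) - h t| ≤ 2 * ε := by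
  obtain ⟨N, a, b, hab, hE⟩ := exists_Icc_forall_ge_abs_sub_le hc hp hε
  refine ⟨b - a, sub_pos.2 hab, eventually_atTop.2 ⟨N + a, fun t ht y hy => ?_⟩⟩
  have h₁ := hE (a + y) ⟨by linarith [hy.1], by linarith [hy.2]⟩ (t - a) (by linarith)
  have h₂ := hE a ⟨le_rfl, hab.le⟩ (t - a) (by linarith)
  rw [show t - a + (a + y) = t + y by ring] at h₁
  rw [sub_add_cancel] at h₂
  calc |h (t + y) - h t| = |(h (t + y) - h (t - a)) - (h t - h (t - a))| := by ring_nf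
    _ ≤ |h (t + y) - h (t - a)| + |h t - h (t - a)| := abs_sub _ _
    _ ≤ 2 * ε := by linarith

/-- The uniform convergence theorem, additive form. -/
theorem tendstoUniformlyOn_sub_of_tendsto_sub (hc : Continuous h)
    (hp : ∀ s, Tendsto (fun t => h (t + s) - h t) atTop (𝓝 0)) (b : ℝ) :
    TendstoUniformlyOn (fun t s => h (t + s) - h t) 0 atTop (Icc 0 b) := by
  rw [Metric.tendstoUniformlyOn_iff]
  intro ε hε
  obtain ⟨c, hc0, hU⟩ :=
    exists_pos_eventually_forall_Icc_abs_sub_le hc hp (by positivity : 0 < ε / 4)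
  have hk : ∀ k : ℕ, ∀ᶠ t in atTop, ∀ s ∈ Icc 0 (k * c), |h (t + s) - h t| ≤ 3 * (ε / 4) := by
    intro k
    induction k with
    | zero =>
      refine Eventually.of_forall fun t s hs => ?_
      obtain rfl : s = 0 := by simpa using hs
      simp only [add_zero, sub_self, abs_zero]
      positivity
    | succ k ih =>
      have hshift := (tendsto_atTop_add_const_right _ (k * c) tendsto_id).eventually hU
      have hpt := (hp (k * c)).eventually (Metric.closedBall_mem_nhds 0 (by positivity : 0 < ε / 4))
      filter_upwards [ih, hshift, hpt] with t hih hsh hpt s hs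
      rcases le_or_gt s (k * c) with hsk | hsk
      · exact hih s ⟨hs.1, hsk⟩
      · have h₁ := hsh (s - k * c) ⟨by linarith, by push_cast at hs; linarith [hs.2]⟩
        rw [id, add_add_sub_cancel] at h₁
        rw [Real.dist_eq, sub_zero] at hpt
        calc |h (t + s) - h t| = |(h (t + s) - h (t + k * c)) + (h (t + k * c) - h t)| := by
              ring_nf
          _ ≤ |h (t + s) - h (t + k * c)| + |h (t + k * c) - h t| := abs_add_le _ _
          _ ≤ 3 * (ε / 4) := by linarith
  obtain ⟨k, hk'⟩ := exists_nat_ge (b / c)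
  filter_upwards [hk k] with t ht s hs
  rw [Pi.zero_apply, dist_zero_left, Real.norm_eq_abs]
  have : b ≤ k * c := by rwa [div_le_iff₀ hc0] at hk'
  linarith [ht s ⟨hs.1, hs.2.trans this⟩]

end UniformConvergence

lemma tendsto_log_comp_exp_neg_add_sub {L : ℝ → ℝ} (hLpos : ∀ x > 0, 0 < L x)
    (hLslow : ∀ a > 0, Tendsto (fun x => L (a * x) / L x) (𝓝[>] 0) (𝓝 1)) (s : ℝ) :
    Tendsto (fun t => Real.log (L (Real.exp (-(t + s)))) - Real.log (L (Real.exp (-t))))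
      atTop (𝓝 0) := by
  have hexp : Tendsto (fun t => Real.exp (-t)) atTop (𝓝[>] 0) :=
    tendsto_nhdsWithin_of_tendsto_nhds_of_eventually_within _
      Real.tendsto_exp_neg_atTop_nhds_zero (Eventually.of_forall fun t => Real.exp_pos _)
  have hlog := ((Real.continuousAt_log one_ne_zero).tendsto.comp
    ((hLslow _ (Real.exp_pos (-s))).comp hexp))
  rw [Real.log_one] at hlog
  refine hlog.congr fun t => ?_
  simp only [Function.comp_apply, neg_add, Real.exp_add, mul_comm (Real.exp (-t))]
  exact Real.log_div (hLpos _ (by positivity)).ne' (hLpos _ (Real.exp_pos _)).ne'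

lemma eventually_forall_Icc_abs_log_sub_lt {L : ℝ → ℝ} (hLcont : ContinuousOn L (Ioi 0))
    (hLpos : ∀ x > 0, 0 < L x)
    (hLslow : ∀ a > 0, Tendsto (fun x => L (a * x) / L x) (𝓝[>] 0) (𝓝 1)) {ε : ℝ} (hε : 0 < ε) :
    ∀ᶠ x in 𝓝[>] 0, ∀ a ∈ Icc (1 / 2 : ℝ) 1, |Real.log (L (a * x)) - Real.log (L x)| < ε := by
  set h : ℝ → ℝ := fun t => Real.log (L (Real.exp (-t)))
  have hc : Continuous h := by
    refine continuous_iff_continuousAt.2 fun t => ?_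
    refine ContinuousAt.comp (x := t) (Real.continuousAt_log (hLpos _ (Real.exp_pos _)).ne') ?_
    exact ContinuousAt.comp (x := t) (hLcont.continuousAt (Ioi_mem_nhds (Real.exp_pos _)))
      (Real.continuous_exp.comp continuous_neg).continuousAt
  have hU := Metric.tendstoUniformlyOn_iff.1 (tendstoUniformlyOn_sub_of_tendsto_sub hc
    (tendsto_log_comp_exp_neg_add_sub hLpos hLslow) (Real.log 2)) ε hε
  have hneglog : Tendsto (fun x => -Real.log x) (𝓝[>] 0) atTop :=
    tendsto_neg_atBot_atTop.comp Real.tendsto_log_nhdsGT_zero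
  filter_upwards [hneglog.eventually hU, self_mem_nhdsWithin] with x hx hx0 a ha
  have ha0 : 0 < a := lt_of_lt_of_le (by norm_num) ha.1
  have hs : -Real.log a ∈ Icc 0 (Real.log 2) := by
    refine ⟨neg_nonneg.2 (Real.log_nonpos ha0.le ha.2), ?_⟩
    rw [neg_le, ← Real.log_inv, ← one_div]
    exact Real.log_le_log (by norm_num) ha.1
  have := hx (-Real.log a) hs
  simp only [h, Pi.zero_apply, dist_zero_left, Real.norm_eq_abs, neg_add, neg_neg,
    Real.exp_add, Real.exp_log hx0, Real.exp_log ha0] at this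
  rwa [mul_comm]

lemma abs_sub_le_of_le_two_pow_mul {g : ℝ → ℝ} {δ ε : ℝ}
    (hg : ∀ x ∈ Ioc 0 δ, ∀ a ∈ Icc (1 / 2 : ℝ) 1, |g (a * x) - g x| ≤ ε) (n : ℕ) {u x : ℝ}
    (hu : 0 < u) (hux : u ≤ x) (hxδ : x ≤ δ) (hxn : x ≤ 2 ^ n * u) :
    |g x - g u| ≤ (n + 1) * ε := by
  have hnear : ∀ {x}, u ≤ x → x ≤ δ → x ≤ 2 * u → |g x - g u| ≤ ε := fun {x} hux hxδ hx2 => by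
    have hx0 : 0 < x := hu.trans_le hux
    have := hg x ⟨hx0, hxδ⟩ (u / x)
      ⟨by rw [le_div_iff₀ hx0]; linarith, div_le_one_of_le₀ hux hx0.le⟩
    rwa [div_mul_cancel₀ _ hx0.ne', abs_sub_comm] at this
  have hε : 0 ≤ ε := (abs_nonneg _).trans (hnear le_rfl (hux.trans hxδ) (by linarith))
  induction n generalizing x with
  | zero => simpa using hnear hux hxδ (by linarith)
  | succ n ih =>
    rcases le_or_gt x (2 * u) with hx2 | hx2
    · exact (hnear hux hxδ hx2).trans
        (le_mul_of_one_le_left hε (by push_cast; linarith [(Nat.cast_nonneg n : (0 : ℝ) ≤ n)]))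
    · have hhalf := hg x ⟨hu.trans_le hux, hxδ⟩ (1 / 2) ⟨le_rfl, by norm_num⟩
      have hrest := ih (x := 1 / 2 * x) (by linarith) (by linarith)
        (by rw [pow_succ] at hxn; linarith)
      rw [abs_sub_comm] at hhalf
      calc |g x - g u| ≤ |g x - g (1 / 2 * x)| + |g (1 / 2 * x) - g u| := abs_sub_le _ _ _
        _ ≤ ε + (n + 1) * ε := add_le_add hhalf hrest
        _ = (↑(n + 1) + 1) * ε := by push_cast; ring

lemma le_exp_mul_of_abs_log_sub_le {p q c : ℝ} (hp : 0 < p) (hq : 0 < q)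
    (h : |Real.log p - Real.log q| ≤ c) : p ≤ Real.exp c * q :=
  calc p = Real.exp (Real.log p) := (Real.exp_log hp).symm
    _ ≤ Real.exp (c + Real.log q) := Real.exp_le_exp.2 (by linarith [(abs_le.1 h).2])
    _ = Real.exp c * q := by rw [Real.exp_add, Real.exp_log hq]

/-- Potter's bounds. -/
theorem exists_potter_bounds {L : ℝ → ℝ} (hLcont : ContinuousOn L (Ioi 0))
    (hLpos : ∀ x > 0, 0 < L x)
    (hLslow : ∀ a > 0, Tendsto (fun x => L (a * x) / L x) (𝓝[>] 0) (𝓝 1)) {η : ℝ} (hη : 0 < η) :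
    ∃ δ > 0, ∀ u x, 0 < u → u ≤ x → x ≤ δ →
      L x ≤ Real.exp η * (x / u) ^ η * L u ∧ L u ≤ Real.exp η * (x / u) ^ η * L x := by
  set ε := η * Real.log 2 / 2
  have hlog2 := Real.log_pos one_lt_two
  obtain ⟨δ, hδ, hsub⟩ := mem_nhdsGT_iff_exists_Ioc_subset.1
    (eventually_forall_Icc_abs_log_sub_lt hLcont hLpos hLslow (by positivity : 0 < ε))
  refine ⟨δ, hδ, fun u x hu hux hxδ => ?_⟩
  have hxu : 1 ≤ x / u := (one_le_div hu).2 hux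
  have hlogb := Real.logb_nonneg one_lt_two hxu
  -- `n` halvings lead from `x` down to `u`, each changing `log ∘ L` by at most `ε`
  set n := ⌈Real.logb 2 (x / u)⌉₊
  have hxn : x ≤ 2 ^ n * u := by
    have := (Real.logb_le_iff_le_rpow one_lt_two (by positivity)).1
      (Nat.le_ceil (Real.logb 2 (x / u)))
    rwa [Real.rpow_natCast, div_le_iff₀ hu] at this
  have hchain := abs_sub_le_of_le_two_pow_mul (g := Real.log ∘ L)
    (fun x hx a ha => (hsub hx a ha).le) n hu hux hxδ hxn
  have hbound : |Real.log (L x) - Real.log (L u)| ≤ η + η * Real.log (x / u) := by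
    refine hchain.trans ?_
    have hn : (n : ℝ) < Real.logb 2 (x / u) + 1 := Nat.ceil_lt_add_one hlogb
    have hlog : 0 ≤ Real.log (x / u) := Real.log_nonneg hxu
    calc (n + 1) * ε ≤ (Real.logb 2 (x / u) + 2) * ε :=
          mul_le_mul_of_nonneg_right (by linarith) (by positivity)
      _ = η / 2 * Real.log (x / u) + η * Real.log 2 := by
          rw [Real.logb]; field_simp; ring
      _ ≤ η + η * Real.log (x / u) := by nlinarith [Real.log_two_lt_d9]
  have hexp : Real.exp (η + η * Real.log (x / u)) = Real.exp η * (x / u) ^ η := by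
    rw [Real.exp_add, Real.rpow_def_of_pos (by positivity), mul_comm η]
  have hx0 := hu.trans_le hux
  rw [← hexp]
  exact ⟨le_exp_mul_of_abs_log_sub_le (hLpos x hx0) (hLpos u hu) hbound,
    le_exp_mul_of_abs_log_sub_le (hLpos u hu) (hLpos x hx0) (by rwa [abs_sub_comm])⟩

lemma tendsto_div_rpow_nhds_zero {p : ℝ} (hp : 0 < p) (c : ℝ) :
    Tendsto (fun u : ℝ => (u / c) ^ p) (𝓝 0) (𝓝 0) := by
  have := (((continuousAt_id (x := (0 : ℝ))).div_const c).rpow_const (p := p)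
    (Or.inr hp.le)).tendsto
  rwa [id, zero_div, Real.zero_rpow hp.ne'] at this

lemma rpow_mul_setIntegral_Ioc_rpow_neg_sub_one {γ u δ : ℝ} (hγ : γ ≠ 0) (hu : 0 < u)
    (huδ : u ≤ δ) : u ^ γ * ∫ x in Ioc u δ, x ^ (-γ - 1) = (1 - (u / δ) ^ γ) / γ := by
  have hδ := hu.trans_le huδ
  rw [← intervalIntegral.integral_of_le huδ, integral_rpow (Or.inr ⟨by contrapose! hγ; linarith,
    fun h0 => (hu.trans_le (uIcc_of_le huδ ▸ h0).1).false⟩), sub_add_cancel,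
    Real.div_rpow hu.le hδ.le, Real.rpow_neg hu.le, Real.rpow_neg hδ.le]
  have := (Real.rpow_pos_of_pos hu γ).ne'
  field_simp
  ring

lemma rpow_div_mul_rpow_div_rpow {x u : ℝ} (hx : 0 < x) (hu : 0 < u) (α η : ℝ) :
    (x / u) ^ η * u ^ α / x ^ (1 + α) = u ^ (α - η) * x ^ (-(α - η) - 1) := by
  rw [Real.div_rpow hx.le hu.le, Real.rpow_sub hu, Real.rpow_sub hx, Real.rpow_neg hx.le,
    Real.rpow_sub hx, Real.rpow_add hx, Real.rpow_one]
  have := (Real.rpow_pos_of_pos hu η).ne'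
  have := (Real.rpow_pos_of_pos hx η).ne'
  have := (Real.rpow_pos_of_pos hx α).ne'
  field_simp

section Karamata

variable {α : ℝ} {L : ℝ → ℝ}

lemma continuousOn_one_div_rpow_mul (hLcont : ContinuousOn L (Ioi 0))
    (hLpos : ∀ x > 0, 0 < L x) :
    ContinuousOn (fun x => 1 / (x ^ (1 + α) * L x)) (Ioi 0) :=
  continuousOn_const.div ((continuousOn_id.rpow_const fun _ hx => Or.inl (ne_of_gt hx)).mul hLcont)
    fun x hx => (mul_pos (Real.rpow_pos_of_pos hx _) (hLpos x hx)).ne'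

lemma integrableOn_Ioc_of_continuousOn_Ioi {f : ℝ → ℝ} (hf : ContinuousOn f (Ioi 0)) {u : ℝ}
    (hu : 0 < u) (d : ℝ) : IntegrableOn f (Ioc u d) :=
  (hf.mono fun _ hx => hu.trans_le hx.1).integrableOn_Icc.mono_set Ioc_subset_Icc_self

lemma rpow_mul_mul_one_div_rpow_mul {u x : ℝ} (hu : 0 < u) (hx : 0 < x) (hLpos : ∀ x > 0, 0 < L x) :
    u ^ α * L u * (1 / (x ^ (1 + α) * L x)) = L u / L x * (u ^ α / x ^ (1 + α)) := by
  have := (hLpos x hx).ne'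
  field_simp

lemma rpow_mul_mul_setIntegral_Ioc_le {η u δ : ℝ} (hLcont : ContinuousOn L (Ioi 0))
    (hLpos : ∀ x > 0, 0 < L x) (hηα : η < α) (hu : 0 < u) (huδ : u ≤ δ)
    (hL : ∀ x ∈ Ioc u δ, L u ≤ Real.exp η * (x / u) ^ η * L x) :
    u ^ α * L u * ∫ x in Ioc u δ, 1 / (x ^ (1 + α) * L x) ≤ Real.exp η / (α - η) := by
  have hpt : ∀ x ∈ Ioc u δ, u ^ α * L u * (1 / (x ^ (1 + α) * L x)) ≤
      Real.exp η * (u ^ (α - η) * x ^ (-(α - η) - 1)) := fun x hx => by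
    have hx0 := hu.trans hx.1
    rw [rpow_mul_mul_one_div_rpow_mul hu hx0 hLpos, ← rpow_div_mul_rpow_div_rpow hx0 hu,
      mul_div_assoc, ← mul_assoc]
    gcongr
    exact (div_le_iff₀ (hLpos x hx0)).2 (hL x hx)
  rw [← integral_const_mul]
  calc _ ≤ ∫ x in Ioc u δ, Real.exp η * (u ^ (α - η) * x ^ (-(α - η) - 1)) :=
        setIntegral_mono_on ((integrableOn_Ioc_of_continuousOn_Ioi
          (continuousOn_one_div_rpow_mul hLcont hLpos) hu δ).const_mul _)
          ((integrableOn_Ioc_of_continuousOn_Ioi (continuousOn_const.mul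
            (continuousOn_id.rpow_const fun _ hx => Or.inl (ne_of_gt hx))) hu δ).const_mul _)
          measurableSet_Ioc hpt
    _ = Real.exp η * ((1 - (u / δ) ^ (α - η)) / (α - η)) := by
        rw [integral_const_mul, integral_const_mul,
          rpow_mul_setIntegral_Ioc_rpow_neg_sub_one (by linarith) hu huδ]
    _ ≤ Real.exp η / (α - η) := by
        rw [mul_div_assoc']
        refine div_le_div_of_nonneg_right (mul_le_of_le_one_right (Real.exp_pos η).le ?_)
          (by linarith)
        linarith [Real.rpow_nonneg (div_nonneg hu.le (hu.trans_le huδ).le) (α - η)]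

lemma le_rpow_mul_mul_setIntegral_Ioc {η u δ : ℝ} (hLcont : ContinuousOn L (Ioi 0))
    (hLpos : ∀ x > 0, 0 < L x) (hαη : α + η ≠ 0) (hu : 0 < u) (huδ : u ≤ δ)
    (hL : ∀ x ∈ Ioc u δ, L x ≤ Real.exp η * (x / u) ^ η * L u) :
    Real.exp (-η) * (1 - (u / δ) ^ (α + η)) / (α + η) ≤
      u ^ α * L u * ∫ x in Ioc u δ, 1 / (x ^ (1 + α) * L x) := by
  have hpt : ∀ x ∈ Ioc u δ, Real.exp (-η) * (u ^ (α + η) * x ^ (-(α + η) - 1)) ≤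
      u ^ α * L u * (1 / (x ^ (1 + α) * L x)) := fun x hx => by
    have hx0 := hu.trans hx.1
    rw [rpow_mul_mul_one_div_rpow_mul hu hx0 hLpos, ← sub_neg_eq_add,
      ← rpow_div_mul_rpow_div_rpow hx0 hu, mul_div_assoc, ← mul_assoc]
    gcongr
    rw [le_div_iff₀ (hLpos x hx0)]
    have hxu := Real.rpow_pos_of_pos (div_pos hx0 hu) η
    calc Real.exp (-η) * (x / u) ^ (-η) * L x
        ≤ Real.exp (-η) * (x / u) ^ (-η) * (Real.exp η * (x / u) ^ η * L u) := by
          gcongr; exact hL x hx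
      _ = L u := by
          rw [Real.exp_neg, Real.rpow_neg (div_pos hx0 hu).le]
          field_simp
  rw [← integral_const_mul]
  calc _ = ∫ x in Ioc u δ, Real.exp (-η) * (u ^ (α + η) * x ^ (-(α + η) - 1)) := by
        rw [integral_const_mul, integral_const_mul,
          rpow_mul_setIntegral_Ioc_rpow_neg_sub_one hαη hu huδ, mul_div_assoc]
    _ ≤ _ :=
        setIntegral_mono_on ((integrableOn_Ioc_of_continuousOn_Ioi (continuousOn_const.mul
            (continuousOn_id.rpow_const fun _ hx => Or.inl (ne_of_gt hx))) hu δ).const_mul _)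
          ((integrableOn_Ioc_of_continuousOn_Ioi
          (continuousOn_one_div_rpow_mul hLcont hLpos) hu δ).const_mul _)
          measurableSet_Ioc hpt

lemma tendsto_rpow_mul_nhdsGT_zero (hLcont : ContinuousOn L (Ioi 0)) (hLpos : ∀ x > 0, 0 < L x)
    (hLslow : ∀ a > 0, Tendsto (fun x => L (a * x) / L x) (𝓝[>] 0) (𝓝 1)) (hα : 0 < α) :
    Tendsto (fun u => u ^ α * L u) (𝓝[>] 0) (𝓝 0) := by
  obtain ⟨δ, hδ, hpotter⟩ := exists_potter_bounds hLcont hLpos hLslow (half_pos hα)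
  have hlim := ((tendsto_div_rpow_nhds_zero (half_pos hα) 1).mono_left
    (nhdsWithin_le_nhds (s := Ioi 0))).const_mul
    (Real.exp (α / 2) * δ ^ (α / 2) * L δ)
  rw [mul_zero] at hlim
  refine squeeze_zero' ?_ ?_ hlim
  · filter_upwards [self_mem_nhdsWithin] with u (hu : 0 < u)
    exact mul_nonneg (Real.rpow_nonneg hu.le _) (hLpos u hu).le
  · filter_upwards [Ioc_mem_nhdsGT hδ] with u hu
    calc u ^ α * L u ≤ u ^ α * (Real.exp (α / 2) * (δ / u) ^ (α / 2) * L δ) :=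
          mul_le_mul_of_nonneg_left (hpotter u δ hu.1 hu.2 le_rfl).2 (Real.rpow_nonneg hu.1.le _)
      _ = Real.exp (α / 2) * δ ^ (α / 2) * L δ * (u / 1) ^ (α / 2) := by
          have := (Real.rpow_pos_of_pos hu.1 (α / 2)).ne'
          rw [div_one, Real.div_rpow hδ.le hu.1.le, ← add_halves α, Real.rpow_add hu.1, add_halves]
          field_simp

lemma setIntegral_Ioi_eq_setIntegral_Ioc_add (hLcont : ContinuousOn L (Ioi 0))
    (hLpos : ∀ x > 0, 0 < L x) (hint : IntegrableOn (fun x => 1 / (x ^ (1 + α) * L x)) (Ioi 1))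
    {u δ : ℝ} (hu : 0 < u) (huδ : u ≤ δ) :
    ∫ x in Ioi u, 1 / (x ^ (1 + α) * L x) =
      (∫ x in Ioc u δ, 1 / (x ^ (1 + α) * L x)) + ∫ x in Ioi δ, 1 / (x ^ (1 + α) * L x) := by
  have hcont := continuousOn_one_div_rpow_mul hLcont hLpos (α := α)
  have hIoi : IntegrableOn (fun x => 1 / (x ^ (1 + α) * L x)) (Ioi δ) := by
    have := (integrableOn_Ioc_of_continuousOn_Ioi hcont (hu.trans_le huδ) (max δ 1)).union
      (hint.mono_set (Ioi_subset_Ioi (le_max_right δ 1)))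
    rwa [Ioc_union_Ioi_eq_Ioi (le_max_left δ 1)] at this
  rw [← Ioc_union_Ioi_eq_Ioi huδ, setIntegral_union (Ioc_disjoint_Ioi le_rfl) measurableSet_Ioi
    (integrableOn_Ioc_of_continuousOn_Ioi hcont hu δ) hIoi]

lemma eventually_lt_rpow_mul_mul_setIntegral_Ioi (hLcont : ContinuousOn L (Ioi 0))
    (hLpos : ∀ x > 0, 0 < L x)
    (hLslow : ∀ a > 0, Tendsto (fun x => L (a * x) / L x) (𝓝[>] 0) (𝓝 1)) (hα : 0 < α)
    (hint : IntegrableOn (fun x => 1 / (x ^ (1 + α) * L x)) (Ioi 1)) {a : ℝ} (ha : a < 1) :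
    ∀ᶠ u in 𝓝[>] 0, a < u ^ α * L u * (α * ∫ x in Ioi u, 1 / (x ^ (1 + α) * L x)) := by
  have hlim : Tendsto (fun η => α * (Real.exp (-η) / (α + η))) (𝓝[>] 0) (𝓝 1) := by
    have : ContinuousAt (fun η => α * (Real.exp (-η) / (α + η))) 0 := by
      fun_prop (disch := simp [hα.ne'])
    simpa [hα.ne'] using this.tendsto.mono_left nhdsWithin_le_nhds
  obtain ⟨η, hηa, hη : 0 < η⟩ :=
    ((hlim.eventually (lt_mem_nhds ha)).and self_mem_nhdsWithin).exists
  obtain ⟨δ, hδ, hpotter⟩ := exists_potter_bounds hLcont hLpos hLslow hη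
  have hW : Tendsto (fun u => α * (Real.exp (-η) * (1 - (u / δ) ^ (α + η)) / (α + η)))
      (𝓝[>] 0) (𝓝 (α * (Real.exp (-η) / (α + η)))) := by
    simpa using (((tendsto_div_rpow_nhds_zero (by linarith) δ).mono_left
      nhdsWithin_le_nhds).const_sub 1 |>.const_mul (Real.exp (-η))).div_const (α + η)
        |>.const_mul α
  filter_upwards [hW.eventually (lt_mem_nhds hηa), Ioc_mem_nhdsGT hδ] with u hWu hu
  have hlow := le_rpow_mul_mul_setIntegral_Ioc hLcont hLpos (add_pos hα hη).ne' hu.1 hu.2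
    fun x hx => (hpotter u x hu.1 hx.1.le hx.2).1
  have htail : 0 ≤ u ^ α * L u * ∫ x in Ioi δ, 1 / (x ^ (1 + α) * L x) :=
    mul_nonneg (mul_nonneg (Real.rpow_nonneg hu.1.le _) (hLpos u hu.1).le)
      (setIntegral_nonneg measurableSet_Ioi fun x (hx : δ < x) => (one_div_pos.2
        (mul_pos (Real.rpow_pos_of_pos (hδ.trans hx) _) (hLpos x (hδ.trans hx)))).le)
  rw [setIntegral_Ioi_eq_setIntegral_Ioc_add hLcont hLpos hint hu.1 hu.2]
  nlinarith [mul_le_mul_of_nonneg_left hlow hα.le]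

lemma eventually_rpow_mul_mul_setIntegral_Ioi_lt (hLcont : ContinuousOn L (Ioi 0))
    (hLpos : ∀ x > 0, 0 < L x)
    (hLslow : ∀ a > 0, Tendsto (fun x => L (a * x) / L x) (𝓝[>] 0) (𝓝 1)) (hα : 0 < α)
    (hint : IntegrableOn (fun x => 1 / (x ^ (1 + α) * L x)) (Ioi 1)) {b : ℝ} (hb : 1 < b) :
    ∀ᶠ u in 𝓝[>] 0, u ^ α * L u * (α * ∫ x in Ioi u, 1 / (x ^ (1 + α) * L x)) < b := by
  have hlim : Tendsto (fun η => α * (Real.exp η / (α - η))) (𝓝[>] 0) (𝓝 1) := by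
    have : ContinuousAt (fun η => α * (Real.exp η / (α - η))) 0 := by
      fun_prop (disch := simp [hα.ne'])
    simpa [hα.ne'] using this.tendsto.mono_left nhdsWithin_le_nhds
  obtain ⟨η, hηb, hη⟩ := ((hlim.eventually (gt_mem_nhds hb)).and (Ioo_mem_nhdsGT hα)).exists
  obtain ⟨δ, hδ, hpotter⟩ := exists_potter_bounds hLcont hLpos hLslow hη.1
  have htail : Tendsto (fun u => u ^ α * L u * (α * ∫ x in Ioi δ, 1 / (x ^ (1 + α) * L x)))
      (𝓝[>] 0) (𝓝 0) := by
    simpa using (tendsto_rpow_mul_nhdsGT_zero hLcont hLpos hLslow hα).mul_const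
      (α * ∫ x in Ioi δ, 1 / (x ^ (1 + α) * L x))
  filter_upwards [htail.eventually (gt_mem_nhds (sub_pos.2 hηb)), Ioc_mem_nhdsGT hδ]
    with u htailu hu
  have hup := rpow_mul_mul_setIntegral_Ioc_le hLcont hLpos hη.2 hu.1 hu.2
    fun x hx => (hpotter u x hu.1 hx.1.le hx.2).2
  rw [setIntegral_Ioi_eq_setIntegral_Ioc_add hLcont hLpos hint hu.1 hu.2]
  nlinarith [mul_le_mul_of_nonneg_left hup hα.le]

/-- Karamata's theorem at `0`. -/
theorem tendsto_rpow_mul_mul_setIntegral_Ioi (hLcont : ContinuousOn L (Ioi 0))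
    (hLpos : ∀ x > 0, 0 < L x)
    (hLslow : ∀ a > 0, Tendsto (fun x => L (a * x) / L x) (𝓝[>] 0) (𝓝 1)) (hα : 0 < α)
    (hint : IntegrableOn (fun x => 1 / (x ^ (1 + α) * L x)) (Ioi 1)) :
    Tendsto (fun u => u ^ α * L u * (α * ∫ x in Ioi u, 1 / (x ^ (1 + α) * L x)))
      (𝓝[>] 0) (𝓝 1) :=
  tendsto_order.2 ⟨fun _ ha => eventually_lt_rpow_mul_mul_setIntegral_Ioi hLcont hLpos hLslow hα
    hint ha, fun _ hb => eventually_rpow_mul_mul_setIntegral_Ioi_lt hLcont hLpos hLslow hα hint hb⟩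

end Karamata

theorem critical_minimal_solution_asymptotic_general (α : ℝ) (hα : α ∈ Set.Ioc (0:ℝ) 1)
    (L : ℝ → ℝ) (hLcont : ContinuousOn L (Set.Ioi (0:ℝ)))
    (hLpos : ∀ x > (0:ℝ), 0 < L x)
    (hLslow : ∀ a > (0:ℝ),
      Tendsto (fun x => L (a * x) / L x) (nhdsWithin 0 (Set.Ioi 0)) (nhds 1))
    (Ψ : ℝ → ℝ) (hΨ : ∀ x > (0:ℝ), Ψ x = x ^ ((1:ℝ) + α) * L x)
    (hint : IntegrableOn (fun x => 1 / Ψ x) (Set.Ioi (1:ℝ)))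
    (v : ℝ → ℝ) (hvpos : ∀ r > (0:ℝ), 0 < v r)
    (hv0 : Tendsto v atTop (nhds 0))
    (hvmin : ∀ r > (0:ℝ), ∫ x in Set.Ioi (v r), 1 / Ψ x = r) :
    Tendsto (fun r => (v r) ^ α * L (v r) * (α * r)) atTop (nhds 1) := by
  have hΨ' : EqOn (fun x => 1 / Ψ x) (fun x => 1 / (x ^ (1 + α) * L x)) (Ioi 0) :=
    fun x hx => by simp only [hΨ x hx]
  have hkaramata := tendsto_rpow_mul_mul_setIntegral_Ioi hLcont hLpos hLslow hα.1
    (hint.congr_fun (hΨ'.mono (Ioi_subset_Ioi zero_le_one)) measurableSet_Ioi)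
  have hv : Tendsto v atTop (𝓝[>] 0) := tendsto_nhdsWithin_of_tendsto_nhds_of_eventually_within _
    hv0 ((eventually_gt_atTop 0).mono hvpos)
  refine (hkaramata.comp hv).congr' ?_
  filter_upwards [eventually_gt_atTop 0] with r hr
  rw [Function.comp_apply, ← setIntegral_congr_fun measurableSet_Ioi
    (hΨ'.mono (Ioi_subset_Ioi (hvpos r hr).le)), hvmin r hr]

theorem critical_minimal_solution_asymptotic (α : ℝ) (hα : α ∈ Set.Ioc (0:ℝ) 1)
    (L : ℝ → ℝ) (hLcont : ContinuousOn L (Set.Ioi (0:ℝ)))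
    (hLpos : ∀ x > (0:ℝ), 0 < L x)
    (hLslow : ∀ a > (0:ℝ),
      Tendsto (fun x => L (a * x) / L x) (nhdsWithin 0 (Set.Ioi 0)) (nhds 1))
    (Ψ : ℝ → ℝ) (hΨ : ∀ x > (0:ℝ), Ψ x = x ^ ((1:ℝ) + α) * L x)
    (hint : IntegrableOn (fun x => 1 / Ψ x) (Set.Ioi (1:ℝ)))
    (v : ℝ → ℝ) (hvpos : ∀ r > (0:ℝ), 0 < v r)
    (hvanti : StrictAntiOn v (Set.Ioi (0:ℝ)))
    (hode : ∀ r > (0:ℝ), HasDerivAt v (-Ψ (v r)) r)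
    (hv0 : Tendsto v atTop (nhds 0))
    (hvinf : Tendsto v (nhdsWithin 0 (Set.Ioi 0)) atTop)
    (hvmin : ∀ r > (0:ℝ), ∫ x in Set.Ioi (v r), 1 / Ψ x = r) :
    Tendsto (fun r => (v r) ^ α * L (v r) * (α * r)) atTop (nhds 1) :=
  critical_minimal_solution_asymptotic_general α hα L hLcont hLpos hLslow Ψ hΨ hint v hvpos hv0
    hvmin
end

section
/- In the setting of Proposition 1 (Ψ(u) = u^{1+α}L(u), v(t) as above), fix λ > 0 and let f(t) ∼ v(t); define s = s(t) by v(s) = λ f(t). Then s(t)·λ^α ∼ t as t → ∞, and log(v(t+s)/v(t)) → −(1/α)·log(1 + λ^{−α}) as t → ∞; consequently v(t+s)/v(t) → (1 + λ^{−α})^{−1/α}. -/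
/-!
Put `φ r = α * log (v r) + log r`. The equation `v' = -Ψ v` and the asymptotics of `v` give
`r * φ' r = 1 - α r v(r)^α L(v r) → 0`, so by the mean value theorem for `φ ∘ exp` the function `φ`
is eventually `δ`-Lipschitz in `log r`, for every `δ > 0`. Hence, along any `a t → ∞`,
`α log (v (a t) / v t)` is asymptotically equivalent to `log (t / a t)`: the limits
`v (a t) / v t → μ` and `a t / t → μ ^ (-α)` imply each other. For `a = s` we have
`v (s t) / v t = λ f t / v t → λ`, whence `s t / t → λ ^ (-α)`; then `a t = t + s t` satisfies
`a t / t → 1 + λ ^ (-α)`, which yields the limit of `v (t + s t) / v t` and of its logarithm.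
-/

open Set Filter Asymptotics Topology Real

theorem abs_sub_le_mul_abs_log_sub_of_abs_mul_deriv_le {φ φ' : ℝ → ℝ} {T δ : ℝ} (hT : 0 < T)
    (hφ : ∀ r ≥ T, HasDerivAt φ (φ' r) r) (hbound : ∀ r ≥ T, |r * φ' r| ≤ δ)
    {t₁ t₂ : ℝ} (h₁ : T ≤ t₁) (h₂ : T ≤ t₂) :
    |φ t₂ - φ t₁| ≤ δ * |log t₂ - log t₁| := by
  have hexp : ∀ u ∈ Ici (log T), T ≤ exp u := fun u hu => by
    simpa [exp_log hT] using exp_le_exp.2 (mem_Ici.1 hu)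
  have hderiv : ∀ u ∈ Ici (log T),
      HasDerivWithinAt (φ ∘ exp) (φ' (exp u) * exp u) (Ici (log T)) u :=
    fun u hu => ((hφ _ (hexp u hu)).comp u (hasDerivAt_exp u)).hasDerivWithinAt
  have := (convex_Ici (log T)).norm_image_sub_le_of_norm_hasDerivWithin_le hderiv
    (fun u hu => by rw [norm_eq_abs, mul_comm]; exact hbound _ (hexp u hu))
    (log_le_log hT h₁) (log_le_log hT h₂)
  simpa [exp_log (hT.trans_le h₁), exp_log (hT.trans_le h₂)] using this

theorem isLittleO_comp_sub_comp_of_tendsto_mul_deriv {φ φ' : ℝ → ℝ}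
    (hφ : ∀ᶠ r in atTop, HasDerivAt φ (φ' r) r)
    (hφ' : Tendsto (fun r => r * φ' r) atTop (𝓝 0)) {ι : Type*} {l : Filter ι} {a b : ι → ℝ}
    (ha : Tendsto a l atTop) (hb : Tendsto b l atTop) :
    (fun i => φ (a i) - φ (b i)) =o[l] fun i => log (a i) - log (b i) := by
  refine IsLittleO.of_bound fun δ hδ => ?_
  have hsmall : ∀ᶠ r in atTop, |r * φ' r| ≤ δ := by
    simpa [Metric.mem_closedBall, dist_zero_right] using
      hφ'.eventually (Metric.closedBall_mem_nhds 0 hδ)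
  obtain ⟨T, hT⟩ := eventually_atTop.1 ((hφ.and hsmall).and (eventually_gt_atTop 0))
  filter_upwards [ha.eventually_ge_atTop T, hb.eventually_ge_atTop T] with i hai hbi
  simp only [norm_eq_abs]
  exact abs_sub_le_mul_abs_log_sub_of_abs_mul_deriv_le (hT T le_rfl).2
    (fun r hr => (hT r hr).1.1) (fun r hr => (hT r hr).1.2) hbi hai

theorem tendsto_of_tendsto_log {ι : Type*} {l : Filter ι} {g : ι → ℝ} {y : ℝ}
    (hg : ∀ᶠ i in l, 0 < g i) (h : Tendsto (fun i => log (g i)) l (𝓝 y)) :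
    Tendsto g l (𝓝 (exp y)) :=
  h.rexp.congr' (hg.mono fun _ hi => exp_log hi)

section RegularVariation

variable {v v' : ℝ → ℝ} {α : ℝ} {a : ℝ → ℝ}

theorem isEquivalent_log_sub_log_of_tendsto_mul_logDeriv
    (hv : ∀ᶠ r in atTop, 0 < v r ∧ HasDerivAt v (v' r) r)
    (hv' : Tendsto (fun r => α * r * v' r / v r) atTop (𝓝 (-1))) (ha : Tendsto a atTop atTop) :
    (fun t => α * (log (v (a t)) - log (v t))) ~[atTop] fun t => log t - log (a t) := by
  have hφ : ∀ᶠ r in atTop,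
      HasDerivAt (fun r => α * log (v r) + log r) (α * (v' r / v r) + r⁻¹) r := by
    filter_upwards [hv, eventually_gt_atTop 0] with r ⟨hvr, hder⟩ hr
    exact ((hder.log hvr.ne').const_mul α).add (hasDerivAt_log hr.ne')
  have hφ' : Tendsto (fun r => r * (α * (v' r / v r) + r⁻¹)) atTop (𝓝 0) := by
    have := hv'.add_const 1
    rw [neg_add_cancel] at this
    refine this.congr' ?_
    filter_upwards [eventually_gt_atTop 0] with r hr
    field_simp
  refine ((isLittleO_comp_sub_comp_of_tendsto_mul_deriv hφ hφ' ha tendsto_id).neg_right).congr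
    (fun t => ?_) (fun t => ?_) <;> simp only [id, Pi.sub_apply] <;> ring

theorem tendsto_div_self_of_tendsto_comp_div
    (hv : ∀ᶠ r in atTop, 0 < v r ∧ HasDerivAt v (v' r) r)
    (hv' : Tendsto (fun r => α * r * v' r / v r) atTop (𝓝 (-1))) (ha : Tendsto a atTop atTop)
    {μ : ℝ} (hμ : 0 < μ) (h : Tendsto (fun t => v (a t) / v t) atTop (𝓝 μ)) :
    Tendsto (fun t => a t / t) atTop (𝓝 (μ ^ (-α))) := by
  have hlog : Tendsto (fun t => α * (log (v (a t)) - log (v t))) atTop (𝓝 (α * log μ)) := by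
    refine ((h.log hμ.ne').const_mul α).congr' ?_
    filter_upwards [hv, ha.eventually hv] with t hvt hvat
    rw [log_div hvat.1.ne' hvt.1.ne']
  have hlog' : Tendsto (fun t => log (a t / t)) atTop (𝓝 (-(α * log μ))) := by
    refine ((isEquivalent_log_sub_log_of_tendsto_mul_logDeriv hv hv' ha).tendsto_nhds
      hlog).neg.congr' ?_
    filter_upwards [ha.eventually_gt_atTop 0, eventually_gt_atTop 0] with t hat ht
    rw [log_div hat.ne' ht.ne', neg_sub]
  convert tendsto_of_tendsto_log ?_ hlog' using 2
  · rw [rpow_def_of_pos hμ, mul_neg, mul_comm]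
  filter_upwards [ha.eventually_gt_atTop 0, eventually_gt_atTop 0] with t hat ht
  positivity

theorem tendsto_comp_div_of_tendsto_div_self
    (hv : ∀ᶠ r in atTop, 0 < v r ∧ HasDerivAt v (v' r) r)
    (hv' : Tendsto (fun r => α * r * v' r / v r) atTop (𝓝 (-1))) (ha : Tendsto a atTop atTop)
    (hα : α ≠ 0) {c : ℝ} (hc : 0 < c) (h : Tendsto (fun t => a t / t) atTop (𝓝 c)) :
    Tendsto (fun t => v (a t) / v t) atTop (𝓝 (c ^ (-(1 / α)))) := by
  have hlog : Tendsto (fun t => log t - log (a t)) atTop (𝓝 (-log c)) := by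
    refine (h.log hc.ne').neg.congr' ?_
    filter_upwards [ha.eventually_gt_atTop 0, eventually_gt_atTop 0] with t hat ht
    rw [log_div hat.ne' ht.ne', neg_sub]
  have hlog' : Tendsto (fun t => log (v (a t) / v t)) atTop (𝓝 (α⁻¹ * -log c)) := by
    refine (((isEquivalent_log_sub_log_of_tendsto_mul_logDeriv hv hv' ha).symm.tendsto_nhds
      hlog).const_mul α⁻¹).congr' ?_
    filter_upwards [hv, ha.eventually hv] with t hvt hvat
    rw [log_div hvat.1.ne' hvt.1.ne']
    field_simp
  convert tendsto_of_tendsto_log ?_ hlog' using 2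
  · rw [rpow_def_of_pos hc]; ring_nf
  filter_upwards [hv, ha.eventually hv] with t hvt hvat
  exact div_pos hvat.1 hvt.1

end RegularVariation

theorem critical_rescaling_limit_general (α : ℝ) (hα : α ∈ Set.Ioc (0:ℝ) 1)
    (L : ℝ → ℝ)
    (Ψ : ℝ → ℝ) (hΨ : ∀ x > (0:ℝ), Ψ x = x ^ ((1:ℝ) + α) * L x)
    (v : ℝ → ℝ) (hvpos : ∀ r > (0:ℝ), 0 < v r)
    (hode : ∀ r > (0:ℝ), HasDerivAt v (-Ψ (v r)) r)
    (hvasym : Tendsto (fun r => (v r) ^ α * L (v r) * (α * r)) atTop (nhds 1))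
    (f : ℝ → ℝ)
    (hfv : Tendsto (fun t => f t / v t) atTop (nhds 1))
    (l : ℝ) (hl : 0 < l)
    (s : ℝ → ℝ) (hs : ∀ t > (0:ℝ), 0 < s t ∧ v (s t) = l * f t)
    (hsinf : Tendsto s atTop atTop) :
    Tendsto (fun t => s t * l ^ α / t) atTop (nhds 1) ∧
    Tendsto (fun t => Real.log (v (t + s t) / v t)) atTop
      (nhds (-(1/α) * Real.log (1 + l ^ (-α)))) ∧
    Tendsto (fun t => v (t + s t) / v t) atTop
      (nhds ((1 + l ^ (-α)) ^ (-(1/α)))) := by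
  have hv : ∀ᶠ r in atTop, 0 < v r ∧ HasDerivAt v (-Ψ (v r)) r :=
    (eventually_gt_atTop 0).mono fun r hr => ⟨hvpos r hr, hode r hr⟩
  have hv' : Tendsto (fun r => α * r * -Ψ (v r) / v r) atTop (𝓝 (-1)) := by
    refine hvasym.neg.congr' ?_
    filter_upwards [eventually_gt_atTop 0] with r hr
    rw [hΨ _ (hvpos r hr), rpow_add (hvpos r hr), rpow_one]
    field_simp [(hvpos r hr).ne']
  have hvs : Tendsto (fun t => v (s t) / v t) atTop (𝓝 l) := by
    refine (by simpa using hfv.const_mul l : Tendsto _ _ (𝓝 l)).congr' ?_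
    filter_upwards [eventually_gt_atTop 0] with t ht
    rw [(hs t ht).2, mul_div_assoc]
  have hst := tendsto_div_self_of_tendsto_comp_div (v' := fun r => -Ψ (v r)) hv hv' hsinf hl hvs
  have hts : Tendsto (fun t => (t + s t) / t) atTop (𝓝 (1 + l ^ (-α))) := by
    refine (hst.const_add 1).congr' ?_
    filter_upwards [eventually_gt_atTop 0] with t ht
    field_simp
  have hlim := tendsto_comp_div_of_tendsto_div_self (v' := fun r => -Ψ (v r))
    (a := fun t => t + s t) hv hv' (tendsto_id.atTop_add_atTop hsinf) hα.1.ne' (by positivity) hts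
  refine ⟨?_, ?_, hlim⟩
  · convert hst.mul_const (l ^ α) using 2 with t
    · ring
    · rw [← rpow_add hl, neg_add_cancel, rpow_zero]
  · convert hlim.log (by positivity) using 2
    rw [log_rpow (by positivity)]

theorem critical_rescaling_limit (α : ℝ) (hα : α ∈ Set.Ioc (0:ℝ) 1)
    (L : ℝ → ℝ) (hLcont : ContinuousOn L (Set.Ioi (0:ℝ)))
    (hLpos : ∀ x > (0:ℝ), 0 < L x)
    (hLslow : ∀ a > (0:ℝ),
      Tendsto (fun x => L (a * x) / L x) (nhdsWithin 0 (Set.Ioi 0)) (nhds 1))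
    (Ψ : ℝ → ℝ) (hΨ : ∀ x > (0:ℝ), Ψ x = x ^ ((1:ℝ) + α) * L x)
    (v : ℝ → ℝ) (hvpos : ∀ r > (0:ℝ), 0 < v r)
    (hvanti : StrictAntiOn v (Set.Ioi (0:ℝ)))
    (hode : ∀ r > (0:ℝ), HasDerivAt v (-Ψ (v r)) r)
    (hvasym : Tendsto (fun r => (v r) ^ α * L (v r) * (α * r)) atTop (nhds 1))
    (f : ℝ → ℝ) (hfpos : ∀ t > (0:ℝ), 0 < f t)
    (hfv : Tendsto (fun t => f t / v t) atTop (nhds 1))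
    (l : ℝ) (hl : 0 < l)
    (s : ℝ → ℝ) (hs : ∀ t > (0:ℝ), 0 < s t ∧ v (s t) = l * f t)
    (hsinf : Tendsto s atTop atTop) :
    Tendsto (fun t => s t * l ^ α / t) atTop (nhds 1) ∧
    Tendsto (fun t => Real.log (v (t + s t) / v t)) atTop
      (nhds (-(1/α) * Real.log (1 + l ^ (-α)))) ∧
    Tendsto (fun t => v (t + s t) / v t) atTop
      (nhds ((1 + l ^ (-α)) ^ (-(1/α)))) :=
  critical_rescaling_limit_general α hα L Ψ hΨ v hvpos hode hvasym f hfv l hl s hs hsinf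
end

section
/- Let φ be a probability generating function φ(r) = Σ_{k≥0} ξ(k) r^k with ξ(0) = 0 and ξ(1) < 1, let c > 0, and suppose ∫_{r}^{1} dx/(c(φ(x)−x)) < ∞ for r near 1 (integral up to 1− finite; note φ(x) < x on (0,1)). Define Φ(r) = ∫_1^r dx/(c(φ(x)−x)) for r ∈ (0,1]. Then Φ(r) → +∞ as r ↓ 0, and moreover as r ↓ 0, Φ'(r) = −1/(β₀ r) − G(r) with β₀ = c(1−ξ(1)) and G bounded near 0. -/
/-!
Because `ξ 0 = 0`, the generating function satisfies `ξ 1 * x ≤ φ x ≤ ξ 1 * x + x ^ 2` on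
`[0, 1]`, so `c (x - φ x) = β₀ x + O(x ^ 2)` with `β₀ = c (1 - ξ 1)`. Hence the
integrand `1 / (c (x - φ x))` is at least `1 / (β₀ x)`, which gives
`Φ r ≥ -log r / β₀ → ∞`, and for `x ≤ (1 - ξ 1) / 2` it differs from `1 / (β₀ x)` by at
most `2 / (c (1 - ξ 1) ^ 2)`. The derivative `Φ' = -1 / (c (r - φ r))` comes from the
fundamental theorem of calculus, `φ` being continuous as a uniformly convergent power series
on `[0, 1]`.
-/

open Set MeasureTheory Filter

section GeneratingFunction

variable {ξ : ℕ → ℝ}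

lemma summable_of_tsum_eq_one (h : ∑' k, ξ k = 1) : Summable ξ := by
  by_contra hs
  simp [tsum_eq_zero_of_not_summable hs] at h

lemma norm_mul_pow_le (hξ : ∀ k, 0 ≤ ξ k) {x : ℝ} (hx : x ∈ Icc (0 : ℝ) 1) (k : ℕ) :
    ‖ξ k * x ^ k‖ ≤ ξ k := by
  rw [norm_mul, norm_pow, Real.norm_of_nonneg (hξ k), Real.norm_of_nonneg hx.1]
  exact mul_le_of_le_one_right (hξ k) (pow_le_one₀ hx.1 hx.2)

lemma summable_mul_pow (hξ : ∀ k, 0 ≤ ξ k) (hs : Summable ξ) {x : ℝ}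
    (hx : x ∈ Icc (0 : ℝ) 1) : Summable (fun k => ξ k * x ^ k) :=
  hs.of_norm_bounded (norm_mul_pow_le hξ hx)

lemma continuousOn_tsum_mul_pow (hξ : ∀ k, 0 ≤ ξ k) (hs : Summable ξ) :
    ContinuousOn (fun x => ∑' k, ξ k * x ^ k) (Icc 0 1) :=
  continuousOn_tsum (fun k => (continuousOn_pow k).const_smul (ξ k)) hs
    fun k _ hx => norm_mul_pow_le hξ hx k

lemma mul_le_tsum_mul_pow (hξ : ∀ k, 0 ≤ ξ k) (hs : Summable ξ) {x : ℝ}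
    (hx : x ∈ Icc (0 : ℝ) 1) : ξ 1 * x ≤ ∑' k, ξ k * x ^ k := by
  simpa using (summable_mul_pow hξ hs hx).le_tsum 1
    fun k _ => mul_nonneg (hξ k) (pow_nonneg hx.1 k)

lemma tsum_mul_pow_le (hξ : ∀ k, 0 ≤ ξ k) (hsum : ∑' k, ξ k = 1) (h0 : ξ 0 = 0) {x : ℝ}
    (hx : x ∈ Icc (0 : ℝ) 1) : ∑' k, ξ k * x ^ k ≤ ξ 1 * x + x ^ 2 := by
  have hs := summable_of_tsum_eq_one hsum
  have hterm : ∀ k, ξ k * x ^ k ≤ (if k = 1 then ξ k * x else 0) + ξ k * x ^ 2 := by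
    intro k
    rcases k with _ | _ | k
    · simp [h0]
    · simpa using mul_nonneg (hξ 1) (sq_nonneg x)
    · simp only [add_eq_right, reduceCtorEq, if_false, zero_add]
      exact mul_le_mul_of_nonneg_left (pow_le_pow_of_le_one hx.1 hx.2 (by omega)) (hξ _)
  calc ∑' k, ξ k * x ^ k
      ≤ ∑' k, ((if k = 1 then ξ k * x else 0) + ξ k * x ^ 2) :=
        (summable_mul_pow hξ hs hx).tsum_le_tsum hterm
          ((summable_of_ne_finset_zero (s := {1}) (by simp_all)).add (hs.mul_right _))
    _ = ξ 1 * x + x ^ 2 := by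
        rw [Summable.tsum_add (summable_of_ne_finset_zero (s := {1}) (by simp_all))
          (hs.mul_right _), tsum_ite_eq, tsum_mul_right, hsum, one_mul]

end GeneratingFunction

lemma abs_one_div_sub_one_div_le {a c x y : ℝ} (hc : 0 < c) (hx : 0 < x)
    (hxa : x ≤ (1 - a) / 2) (hlo : a * x ≤ y) (hhi : y ≤ a * x + x ^ 2) :
    |1 / (c * (x - y)) - 1 / (c * (1 - a) * x)| ≤ 2 / (c * (1 - a) ^ 2) := by
  set δ := 1 - a
  have hδpos : 0 < δ := by linarith
  have hgap : δ * x / 2 ≤ x - y := by nlinarith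
  have hgap' : x - y ≤ δ * x := by linarith
  have hpos : 0 < x - y := by nlinarith
  have hdiff : 1 / (c * (x - y)) - 1 / (c * δ * x)
      = (δ * x - (x - y)) / (c * (x - y) * (δ * x)) := by
    field_simp
  rw [hdiff, abs_of_nonneg (div_nonneg (by linarith) (by positivity)),
    div_le_div_iff₀ (by positivity) (by positivity)]
  calc (δ * x - (x - y)) * (c * δ ^ 2) ≤ x ^ 2 * (c * δ ^ 2) := by gcongr; linarith
    _ = 2 * (c * (δ * x / 2) * (δ * x)) := by ring
    _ ≤ 2 * (c * (x - y) * (δ * x)) := by gcongr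

section IntegralOverIoo

variable {f : ℝ → ℝ}

lemma integral_Ioo_eq_intervalIntegral {a b : ℝ} (hab : a ≤ b) :
    ∫ x in Ioo a b, f x = ∫ x in a..b, f x := by
  rw [intervalIntegral.integral_of_le hab, integral_Ioc_eq_integral_Ioo]

lemma MeasureTheory.IntegrableOn.Ioo_of_continuousOn {a b m r : ℝ}
    (hm : IntegrableOn f (Ioo m b)) (hf : ContinuousOn f (Ioo a b)) (hmb : m < b) (har : a < r) :
    IntegrableOn f (Ioo r b) := by
  have hIcc : IntegrableOn f (Icc r m) :=
    (hf.mono fun x hx => ⟨har.trans_le hx.1, hx.2.trans_lt hmb⟩).integrableOn_Icc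
  refine (hIcc.union hm).mono_set fun x hx => ?_
  rcases le_or_gt x m with hxm | hxm
  · exact Or.inl ⟨hx.1.le, hxm⟩
  · exact Or.inr ⟨hxm, hx.2⟩

lemma hasDerivAt_integral_Ioo_left {a b r : ℝ} (hf : ContinuousOn f (Ioo a b))
    (hint : IntegrableOn f (Ioo r b)) (hr : r ∈ Ioo a b) :
    HasDerivAt (fun t => ∫ x in Ioo t b, f x) (-f r) r := by
  have hII : IntervalIntegrable f volume r b :=
    (intervalIntegrable_iff_integrableOn_Ioo_of_le hr.2.le).2 hint
  have hderiv := intervalIntegral.integral_hasDerivAt_left hII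
    (hf.stronglyMeasurableAtFilter isOpen_Ioo r hr) (hf.continuousAt (isOpen_Ioo.mem_nhds hr))
  refine hderiv.congr_of_eventuallyEq ?_
  filter_upwards [Iio_mem_nhds hr.2] with t ht
  exact integral_Ioo_eq_intervalIntegral (le_of_lt ht)

lemma tendsto_integral_Ioo_one_atTop_of_div_le {K : ℝ} (hK : 0 < K)
    (hint : ∀ r ∈ Ioo (0 : ℝ) 1, IntegrableOn f (Ioo r 1))
    (hle : ∀ x ∈ Ioo (0 : ℝ) 1, K / x ≤ f x) :
    Tendsto (fun r => ∫ x in Ioo r 1, f x) (nhdsWithin 0 (Ioi 0)) atTop := by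
  have hlog : Tendsto (fun r => K * -Real.log r) (nhdsWithin 0 (Ioi 0)) atTop :=
    (tendsto_neg_atBot_atTop.comp Real.tendsto_log_nhdsGT_zero).const_mul_atTop hK
  refine tendsto_atTop_mono' _ ?_ hlog
  filter_upwards [Ioo_mem_nhdsGT zero_lt_one] with r hr
  have hKint : ∫ x in Ioo r 1, K / x = K * -Real.log r := by
    simp_rw [div_eq_mul_inv]
    rw [integral_Ioo_eq_intervalIntegral hr.2.le, intervalIntegral.integral_const_mul,
      integral_inv_of_pos hr.1 zero_lt_one, one_div, Real.log_inv]
  rw [← hKint]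
  refine setIntegral_mono_on ?_ (hint r hr) measurableSet_Ioo
    fun x hx => hle x ⟨hr.1.trans hx.1, hx.2⟩
  exact ((continuousOn_const.div continuousOn_id fun x hx =>
    (hr.1.trans_le hx.1).ne').integrableOn_Icc).mono_set Ioo_subset_Icc_self

end IntegralOverIoo

theorem discrete_Phi_properties (ξ : ℕ → ℝ) (c : ℝ) (hc : 0 < c)
    (hξnn : ∀ k, 0 ≤ ξ k) (hξsum : ∑' k, ξ k = 1)
    (hξ0 : ξ 0 = 0) (hξ1 : ξ 1 < 1)
    (φ : ℝ → ℝ) (hφ : ∀ r ∈ Set.Icc (0:ℝ) 1, φ r = ∑' k, ξ k * r ^ k)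
    (hφlt : ∀ x ∈ Set.Ioo (0:ℝ) 1, φ x < x)
    (hint : IntegrableOn (fun x => 1 / (c * (x - φ x))) (Set.Ioo (1/2 : ℝ) 1))
    (Φ : ℝ → ℝ)
    (hΦ : ∀ r ∈ Set.Ioc (0:ℝ) 1, Φ r = ∫ x in Set.Ioo r 1, 1 / (c * (x - φ x))) :
    Tendsto Φ (nhdsWithin 0 (Set.Ioi 0)) atTop ∧
    ∃ G : ℝ → ℝ, (∃ ε > (0:ℝ), ∃ M : ℝ, ∀ x ∈ Set.Ioo 0 ε, |G x| ≤ M) ∧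
      ∀ r ∈ Set.Ioo (0:ℝ) 1,
        HasDerivAt Φ (-(1 / (c * (1 - ξ 1) * r)) - G r) r := by
  set f : ℝ → ℝ := fun x => 1 / (c * (x - φ x))
  have hs := summable_of_tsum_eq_one hξsum
  have hφ_ge : ∀ x ∈ Icc (0 : ℝ) 1, ξ 1 * x ≤ φ x := fun x hx =>
    (hφ x hx).symm ▸ mul_le_tsum_mul_pow hξnn hs hx
  have hφ_le : ∀ x ∈ Icc (0 : ℝ) 1, φ x ≤ ξ 1 * x + x ^ 2 := fun x hx =>
    (hφ x hx).symm ▸ tsum_mul_pow_le hξnn hξsum hξ0 hx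
  have hf : ContinuousOn f (Ioo 0 1) :=
    continuousOn_const.div (continuousOn_const.mul (continuousOn_id.sub
      (((continuousOn_tsum_mul_pow hξnn hs).congr hφ).mono Ioo_subset_Icc_self)))
      fun x hx => (mul_pos hc (sub_pos.2 (hφlt x hx))).ne'
  have hfint : ∀ r ∈ Ioo (0 : ℝ) 1, IntegrableOn f (Ioo r 1) := fun r hr =>
    hint.Ioo_of_continuousOn hf (by norm_num) hr.1
  have hΦ_nhds : ∀ r ∈ Ioo (0 : ℝ) 1, Φ =ᶠ[nhds r] fun t => ∫ x in Ioo t 1, f x :=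
    fun r hr => eventually_of_mem (isOpen_Ioo.mem_nhds hr) fun t ht =>
      hΦ t (Ioo_subset_Ioc_self ht)
  refine ⟨?_, fun r => f r - 1 / (c * (1 - ξ 1) * r),
    ⟨(1 - ξ 1) / 2, by linarith, 2 / (c * (1 - ξ 1) ^ 2), fun x hx => ?_⟩, fun r hr => ?_⟩
  · refine (tendsto_integral_Ioo_one_atTop_of_div_le (K := (c * (1 - ξ 1))⁻¹)
      (by have := sub_pos.2 hξ1; positivity) hfint fun x hx => ?_).congr' ?_
    · have hφx := hφ_ge x (Ioo_subset_Icc_self hx)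
      calc (c * (1 - ξ 1))⁻¹ / x = 1 / (c * ((1 - ξ 1) * x)) := by field_simp
        _ ≤ f x := one_div_le_one_div_of_le (mul_pos hc (sub_pos.2 (hφlt x hx)))
          (mul_le_mul_of_nonneg_left (by linarith) hc.le)
    · filter_upwards [Ioc_mem_nhdsGT zero_lt_one] with r hr
      exact (hΦ r hr).symm
  · have hx1 : x ≤ 1 := by linarith [hx.2, hξnn 1]
    exact abs_one_div_sub_one_div_le hc hx.1 hx.2.le (hφ_ge x ⟨hx.1.le, hx1⟩)
      (hφ_le x ⟨hx.1.le, hx1⟩)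
  · refine ((hasDerivAt_integral_Ioo_left hf (hfint r hr) hr).congr_of_eventuallyEq
      (hΦ_nhds r hr)).congr_deriv ?_
    ring
end
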